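/- arXiv:2102.11075 — 2 statements merged into one kernel-verified Lean document; each statement's English description precedes it below -/
import Mathlib

section
/- Let Ω and Θ be nonempty types, let ρ_A be a real-valued functional on bounded real-valued functions on Ω, and let ρ_E be a real-valued functional on bounded real-valued functions on Θ. Define the composite risk functional F on bounded functions Z : Θ × Ω → ℝ by F(Z) = ρ_E(θ ↦ ρ_A(ω ↦ Z(θ, ω))). If ρ_A and ρ_E are both coherent risk measures, then F is a coherent risk measure on bounded functions Θ × Ω → ℝ; that is, F is normalized (F(0) = 0), monotone (Z₁ ≤ Z₂ pointwise implies F(Z₁) ≤ F(Z₂)), subadditive (F(Z₁ + Z₂) ≤ F(Z₁) + F(Z₂)), positively homogeneous (F(c • Z) = c · F(Z) for c ≥ 0), and translation invariant (F(Z + c·1) = F(Z) + c for every real c). -/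
/-- A real-valued function is bounded. -/
def IsBddFun {X : Type*} (f : X → ℝ) : Prop := ∃ C : ℝ, ∀ x, |f x| ≤ C

/-- A coherent risk measure on bounded real-valued functions on `X`:
normalized, monotone, subadditive, positively homogeneous and translation
invariant. -/
def IsCoherentRiskMeasure {X : Type*} (ρ : (X → ℝ) → ℝ) : Prop :=
  ρ 0 = 0 ∧
  (∀ f g : X → ℝ, IsBddFun f → IsBddFun g → (∀ x, f x ≤ g x) → ρ f ≤ ρ g) ∧
  (∀ f g : X → ℝ, IsBddFun f → IsBddFun g → ρ (f + g) ≤ ρ f + ρ g) ∧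
  (∀ (c : ℝ) (f : X → ℝ), 0 ≤ c → IsBddFun f → ρ (c • f) = c * ρ f) ∧
  (∀ (c : ℝ) (f : X → ℝ), IsBddFun f → ρ (f + fun _ => c) = ρ f + c)

/-! The outer functional `ρE` only ever sees the function `θ ↦ ρA (Z (θ, ·))`, so every axiom
of the composite is the corresponding axiom of `ρA`, applied slicewise, followed by the axiom of
`ρE`. The only extra input is that this function is bounded whenever `Z` is: a coherent `ρA` is
squeezed between the constants `-C` and `C` bounding a slice, by monotonicity and
`ρA c = c`. -/

namespace IsBddFun

variable {X Y : Type*}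

lemma const (c : ℝ) : IsBddFun (fun _ : X => c) :=
  ⟨|c|, fun _ => le_rfl⟩

lemma add {f g : X → ℝ} (hf : IsBddFun f) (hg : IsBddFun g) : IsBddFun (f + g) := by
  obtain ⟨C, hC⟩ := hf
  obtain ⟨D, hD⟩ := hg
  exact ⟨C + D, fun x => (abs_add_le _ _).trans (add_le_add (hC x) (hD x))⟩

lemma curry {Z : X × Y → ℝ} (hZ : IsBddFun Z) (x : X) : IsBddFun fun y => Z (x, y) := by
  obtain ⟨C, hC⟩ := hZ
  exact ⟨C, fun y => hC (x, y)⟩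

end IsBddFun

namespace IsCoherentRiskMeasure

variable {X : Type*} {ρ : (X → ℝ) → ℝ}

lemma map_const (hρ : IsCoherentRiskMeasure ρ) (c : ℝ) : ρ (fun _ => c) = c := by
  simpa [hρ.1] using hρ.2.2.2.2 c 0 ⟨0, fun _ => by simp⟩

lemma abs_le_of_forall_abs_le (hρ : IsCoherentRiskMeasure ρ) {f : X → ℝ} {C : ℝ}
    (hC : ∀ x, |f x| ≤ C) : |ρ f| ≤ C := by
  have hf : IsBddFun f := ⟨C, hC⟩
  have hlower : ρ (fun _ => -C) ≤ ρ f :=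
    hρ.2.1 _ _ (.const _) hf fun x => (abs_le.1 (hC x)).1
  have hupper : ρ f ≤ ρ (fun _ => C) :=
    hρ.2.1 _ _ hf (.const _) fun x => (abs_le.1 (hC x)).2
  rw [hρ.map_const] at hlower hupper
  exact abs_le.2 ⟨hlower, hupper⟩

end IsCoherentRiskMeasure

section CompositeRisk

variable {Ω Θ : Type*} {ρA : (Ω → ℝ) → ℝ} {ρE : (Θ → ℝ) → ℝ}

def compositeRisk (ρE : (Θ → ℝ) → ℝ) (ρA : (Ω → ℝ) → ℝ) (Z : Θ × Ω → ℝ) : ℝ :=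
  ρE fun θ => ρA fun ω => Z (θ, ω)

lemma IsBddFun.risk_curry (hA : IsCoherentRiskMeasure ρA) {Z : Θ × Ω → ℝ}
    (hZ : IsBddFun Z) : IsBddFun fun θ => ρA fun ω => Z (θ, ω) := by
  obtain ⟨C, hC⟩ := hZ
  exact ⟨C, fun θ => hA.abs_le_of_forall_abs_le fun ω => hC (θ, ω)⟩

lemma compositeRisk_zero (hA : ρA 0 = 0) (hE : ρE 0 = 0) : compositeRisk ρE ρA 0 = 0 := by
  have hslices : (fun θ : Θ => ρA fun ω : Ω => (0 : Θ × Ω → ℝ) (θ, ω)) = 0 :=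
    funext fun _ => hA
  rw [compositeRisk, hslices, hE]

lemma compositeRisk_mono (hA : IsCoherentRiskMeasure ρA) (hE : IsCoherentRiskMeasure ρE)
    {Z₁ Z₂ : Θ × Ω → ℝ} (h₁ : IsBddFun Z₁) (h₂ : IsBddFun Z₂) (hle : ∀ p, Z₁ p ≤ Z₂ p) :
    compositeRisk ρE ρA Z₁ ≤ compositeRisk ρE ρA Z₂ :=
  hE.2.1 _ _ (h₁.risk_curry hA) (h₂.risk_curry hA) fun θ =>
    hA.2.1 _ _ (h₁.curry θ) (h₂.curry θ) fun ω => hle (θ, ω)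

lemma compositeRisk_add_le (hA : IsCoherentRiskMeasure ρA) (hE : IsCoherentRiskMeasure ρE)
    {Z₁ Z₂ : Θ × Ω → ℝ} (h₁ : IsBddFun Z₁) (h₂ : IsBddFun Z₂) :
    compositeRisk ρE ρA (Z₁ + Z₂) ≤ compositeRisk ρE ρA Z₁ + compositeRisk ρE ρA Z₂ :=
  calc compositeRisk ρE ρA (Z₁ + Z₂)
      ≤ ρE ((fun θ => ρA fun ω => Z₁ (θ, ω)) + fun θ => ρA fun ω => Z₂ (θ, ω)) :=
        hE.2.1 _ _ ((h₁.add h₂).risk_curry hA) ((h₁.risk_curry hA).add (h₂.risk_curry hA))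
          fun θ => hA.2.2.1 _ _ (h₁.curry θ) (h₂.curry θ)
    _ ≤ compositeRisk ρE ρA Z₁ + compositeRisk ρE ρA Z₂ :=
        hE.2.2.1 _ _ (h₁.risk_curry hA) (h₂.risk_curry hA)

lemma compositeRisk_smul (hA : IsCoherentRiskMeasure ρA) (hE : IsCoherentRiskMeasure ρE)
    {c : ℝ} (hc : 0 ≤ c) {Z : Θ × Ω → ℝ} (hZ : IsBddFun Z) :
    compositeRisk ρE ρA (c • Z) = c * compositeRisk ρE ρA Z := by
  have hslices : (fun θ => ρA fun ω => (c • Z) (θ, ω)) = c • fun θ => ρA fun ω => Z (θ, ω) :=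
    funext fun θ => hA.2.2.2.1 c _ hc (hZ.curry θ)
  rw [compositeRisk, hslices, hE.2.2.2.1 c _ hc (hZ.risk_curry hA), compositeRisk]

lemma compositeRisk_add_const (hA : IsCoherentRiskMeasure ρA) (hE : IsCoherentRiskMeasure ρE)
    (c : ℝ) {Z : Θ × Ω → ℝ} (hZ : IsBddFun Z) :
    compositeRisk ρE ρA (Z + fun _ => c) = compositeRisk ρE ρA Z + c := by
  have hslices : (fun θ => ρA fun ω => (Z + fun _ => c : Θ × Ω → ℝ) (θ, ω))
      = (fun θ => ρA fun ω => Z (θ, ω)) + fun _ => c :=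
    funext fun θ => hA.2.2.2.2 c _ (hZ.curry θ)
  rw [compositeRisk, hslices, hE.2.2.2.2 c _ (hZ.risk_curry hA), compositeRisk]

end CompositeRisk

theorem composite_risk_coherent_general {Ω Θ : Type*}
    (ρA : (Ω → ℝ) → ℝ) (ρE : (Θ → ℝ) → ℝ)
    (hA : IsCoherentRiskMeasure ρA) (hE : IsCoherentRiskMeasure ρE) :
    IsCoherentRiskMeasure
      (fun Z : Θ × Ω → ℝ => ρE (fun θ => ρA (fun ω => Z (θ, ω)))) :=
  ⟨compositeRisk_zero hA.1 hE.1,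
    fun _ _ h₁ h₂ hle => compositeRisk_mono hA hE h₁ h₂ hle,
    fun _ _ h₁ h₂ => compositeRisk_add_le hA hE h₁ h₂,
    fun _ _ hc hZ => compositeRisk_smul hA hE hc hZ,
    fun c _ hZ => compositeRisk_add_const hA hE c hZ⟩

/-- Coherence Lemma: the composite risk
`F(Z) = ρ_E (θ ↦ ρ_A (ω ↦ Z (θ, ω)))` of two coherent risk measures is itself
a coherent risk measure. -/
theorem composite_risk_coherent {Ω Θ : Type*} [Nonempty Ω] [Nonempty Θ]
    (ρA : (Ω → ℝ) → ℝ) (ρE : (Θ → ℝ) → ℝ)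
    (hA : IsCoherentRiskMeasure ρA) (hE : IsCoherentRiskMeasure ρE) :
    IsCoherentRiskMeasure
      (fun Z : Θ × Ω → ℝ => ρE (fun θ => ρA (fun ω => Z (θ, ω)))) :=
  composite_risk_coherent_general ρA ρE hA hE
end

section
/- Let α ∈ (0, 1], let (Θ, 𝒜, β) be a probability space, and let θ ↦ P_θ be a measurable family of probability measures on ℝ such that each P_θ has finite first moment, the mixture measure P := ∫_Θ P_θ dβ(θ) (the bind of β with the kernel θ ↦ P_θ) has finite first moment, and θ ↦ CVaR_α(P_θ) is β-integrable, where CVaR_α(μ) := sup_{c ∈ ℝ} ( c − α⁻¹ ∫_ℝ max(c − z, 0) dμ(z) ). Then the CVaR of the marginal distribution is at most the β-average of the per-model CVaRs: CVaR_α(P) ≤ ∫_Θ CVaR_α(P_θ) dβ(θ). -/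
open MeasureTheory

/-- The (left-tail) Conditional Value at Risk at level `α`, via the
Rockafellar–Uryasev formula. -/
noncomputable def CVaR (α : ℝ) (μ : Measure ℝ) : ℝ :=
  ⨆ c : ℝ, (c - α⁻¹ * ∫ z, max (c - z) 0 ∂μ)

open ProbabilityTheory

/-! For fixed `c` the Rockafellar–Uryasev objective `c - α⁻¹ ∫ (c - z)⁺ dμ` is affine in `μ`,
so its value at the mixture `β.bind P` is the `β`-average of its values at the `P θ`, each of
which is at most `CVaR α (P θ)`. Taking the supremum over `c` gives the claim: `CVaR α` is a
supremum of affine functionals, hence convex in the measure. -/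

namespace MeasureTheory

variable {Θ X E : Type*} [MeasurableSpace Θ] [MeasurableSpace X]
  [NormedAddCommGroup E] [NormedSpace ℝ E] {β : Measure Θ} {P : Θ → Measure X} {f : X → E}

theorem Measure.integral_bind (hP : Measurable P) (hf : Integrable f (β.bind P)) :
    ∫ x, f x ∂β.bind P = ∫ θ, ∫ x, f x ∂P θ ∂β := by
  let κ : Kernel Θ X := ⟨P, hP⟩
  rw [show β.bind P = κ ∘ₘ β from rfl, Measure.comp_eq_comp_const_apply] at hf ⊢
  exact Kernel.integral_comp hf

theorem Integrable.integral_bind (hP : Measurable P) (hf : Integrable f (β.bind P)) :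
    Integrable (fun θ => ∫ x, f x ∂P θ) β := by
  let κ : Kernel Θ X := ⟨P, hP⟩
  rw [show β.bind P = κ ∘ₘ β from rfl, Measure.comp_eq_comp_const_apply] at hf
  exact hf.integral_comp

end MeasureTheory

noncomputable def ruObjective (α : ℝ) (μ : Measure ℝ) (c : ℝ) : ℝ :=
  c - α⁻¹ * ∫ z, max (c - z) 0 ∂μ

section CVaR

variable {α : ℝ} {μ : Measure ℝ}

theorem integrable_max_sub_zero [IsFiniteMeasure μ] (c : ℝ) (h : Integrable (fun z : ℝ => z) μ) :
    Integrable (fun z : ℝ => max (c - z) 0) μ :=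
  ((integrable_const c).sub h).pos_part

theorem ruObjective_le_integral (hα : α ∈ Set.Ioc (0 : ℝ) 1) [IsProbabilityMeasure μ]
    (h : Integrable (fun z : ℝ => z) μ) (c : ℝ) :
    ruObjective α μ c ≤ ∫ z, z ∂μ := by
  have one_le_inv : 1 ≤ α⁻¹ := one_le_inv₀ hα.1 |>.mpr hα.2
  have tail_nonneg : 0 ≤ ∫ z, max (c - z) 0 ∂μ := integral_nonneg fun _ => le_max_right _ _
  have sub_mean_le_tail : c - ∫ z, z ∂μ ≤ ∫ z, max (c - z) 0 ∂μ := by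
    calc c - ∫ z, z ∂μ = ∫ z, (c - z) ∂μ := by
          rw [integral_sub (integrable_const c) h, integral_const, probReal_univ, one_smul]
      _ ≤ ∫ z, max (c - z) 0 ∂μ :=
          integral_mono ((integrable_const c).sub h) (integrable_max_sub_zero c h)
            fun _ => le_max_left _ _
  have tail_le : ∫ z, max (c - z) 0 ∂μ ≤ α⁻¹ * ∫ z, max (c - z) 0 ∂μ :=
    le_mul_of_one_le_left tail_nonneg one_le_inv
  unfold ruObjective
  linarith

/-- For `α ∈ (0, 1]` the mean bounds the objective from above; without such a bound the
supremum in `CVaR` would take the junk value `0`. -/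
theorem ruObjective_le_cvar (hα : α ∈ Set.Ioc (0 : ℝ) 1) [IsProbabilityMeasure μ]
    (h : Integrable (fun z : ℝ => z) μ) (c : ℝ) :
    ruObjective α μ c ≤ CVaR α μ :=
  le_ciSup (f := ruObjective α μ) ⟨∫ z, z ∂μ, by
    rintro _ ⟨c', rfl⟩
    exact ruObjective_le_integral hα h c'⟩ c

variable {Θ : Type*} [MeasurableSpace Θ] {β : Measure Θ} {P : Θ → Measure ℝ} {c : ℝ}

theorem integrable_ruObjective_of_bind [IsFiniteMeasure β] (hP : Measurable P)
    (hf : Integrable (fun z : ℝ => max (c - z) 0) (β.bind P)) :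
    Integrable (fun θ => ruObjective α (P θ) c) β :=
  (integrable_const c).sub ((hf.integral_bind hP).const_mul α⁻¹)

theorem ruObjective_bind [IsProbabilityMeasure β] (hP : Measurable P)
    (hf : Integrable (fun z : ℝ => max (c - z) 0) (β.bind P)) :
    ruObjective α (β.bind P) c = ∫ θ, ruObjective α (P θ) c ∂β := by
  simp only [ruObjective]
  rw [integral_sub (integrable_const c) ((hf.integral_bind hP).const_mul α⁻¹), integral_const_mul,
    integral_const, probReal_univ, one_smul, Measure.integral_bind hP hf]

end CVaR

/-- The CVaR of the marginal (mixture) distribution `P = ∫ P_θ dβ(θ)` is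
at most the β-average of the per-model CVaRs: the additive CVaR estimate
underestimates the total CVaR risk. -/
theorem cvar_marginal_le_avg_cvar
    {Θ : Type*} [MeasurableSpace Θ]
    (β : Measure Θ) [IsProbabilityMeasure β]
    (P : Θ → Measure ℝ) (hP : Measurable P) [∀ θ, IsProbabilityMeasure (P θ)]
    (α : ℝ) (hα : α ∈ Set.Ioc (0 : ℝ) 1)
    (hint : ∀ θ, Integrable (fun z : ℝ => z) (P θ))
    (hmix : Integrable (fun z : ℝ => z) (β.bind P))
    (hcvar : Integrable (fun θ => CVaR α (P θ)) β) :
    CVaR α (β.bind P) ≤ ∫ θ, CVaR α (P θ) ∂β := by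
  have : IsProbabilityMeasure (β.bind P) :=
    isProbabilityMeasure_bind hP.aemeasurable (ae_of_all _ inferInstance)
  refine ciSup_le fun c => ?_
  have hf := integrable_max_sub_zero c hmix
  calc ruObjective α (β.bind P) c = ∫ θ, ruObjective α (P θ) c ∂β := ruObjective_bind hP hf
    _ ≤ ∫ θ, CVaR α (P θ) ∂β :=
        integral_mono (integrable_ruObjective_of_bind hP hf) hcvar
          fun θ => ruObjective_le_cvar hα (hint θ) c
end
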